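/- Let f : X → Y be a map of topological spaces and suppose Y = ⊔_α S_α is a partition of Y into locally closed subsets satisfying the frontier condition (S_α ∩ closure(S_β) ≠ ∅ implies S_α ⊆ closure(S_β)). If f is continuous, open, and surjective, then the partition X = ⊔_α f⁻¹(S_α) also satisfies the frontier condition. -/

import Mathlib

/-! For a continuous open map, taking closures commutes with taking preimages, so both the
hypothesis and the conclusion of the frontier condition can be read off in `Y`. -/

theorem IsOpenMap.preimage_subset_closure_preimage_of_inter_closure_nonempty
    {X Y : Type*} [TopologicalSpace X] [TopologicalSpace Y] {f : X → Y}
    (hf : Continuous f) (hopen : IsOpenMap f) {A B : Set Y}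
    (hAB : (A ∩ closure B).Nonempty → A ⊆ closure B)
    (hmeet : (f ⁻¹' A ∩ closure (f ⁻¹' B)).Nonempty) :
    f ⁻¹' A ⊆ closure (f ⁻¹' B) := by
  rw [← hopen.preimage_closure_eq_closure_preimage hf] at hmeet ⊢
  obtain ⟨x, hxA, hxB⟩ := hmeet
  exact Set.preimage_mono (hAB ⟨f x, hxA, hxB⟩)

theorem stmt12_general {X Y : Type*} [TopologicalSpace X] [TopologicalSpace Y]
    {ι : Type*} (S : ι → Set Y)
    (hdisj : Pairwise (Function.onFun Disjoint S))
    (hcover : ⋃ α, S α = Set.univ)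
    (hfrontier : ∀ α β, (S α ∩ closure (S β)).Nonempty → S α ⊆ closure (S β))
    (f : X → Y) (hf : Continuous f) (hopen : IsOpenMap f) :
    (⋃ α, f ⁻¹' S α = Set.univ) ∧
    Pairwise (Function.onFun Disjoint fun α => f ⁻¹' S α) ∧
    ∀ α β, (f ⁻¹' S α ∩ closure (f ⁻¹' S β)).Nonempty →
      f ⁻¹' S α ⊆ closure (f ⁻¹' S β) := by
  refine ⟨?_, fun α β hαβ => (hdisj hαβ).preimage f, fun α β =>
    hopen.preimage_subset_closure_preimage_of_inter_closure_nonempty hf (hfrontier α β)⟩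
  rw [← Set.preimage_iUnion, hcover, Set.preimage_univ]

/-- if `Y = ⊔ S_α` is a partition into locally closed sets satisfying the
frontier condition, and `f : X → Y` is a continuous open surjection, then the pullback
partition `X = ⊔ f⁻¹(S_α)` also satisfies the frontier condition. -/
theorem stmt12 {X Y : Type*} [TopologicalSpace X] [TopologicalSpace Y]
    {ι : Type*} (S : ι → Set Y)
    (hlc : ∀ α, IsLocallyClosed (S α))
    (hdisj : Pairwise (Function.onFun Disjoint S))
    (hcover : ⋃ α, S α = Set.univ)
    (hfrontier : ∀ α β, (S α ∩ closure (S β)).Nonempty → S α ⊆ closure (S β))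
    (f : X → Y) (hf : Continuous f) (hopen : IsOpenMap f) (hsurj : Function.Surjective f) :
    (⋃ α, f ⁻¹' S α = Set.univ) ∧
    Pairwise (Function.onFun Disjoint fun α => f ⁻¹' S α) ∧
    ∀ α β, (f ⁻¹' S α ∩ closure (f ⁻¹' S β)).Nonempty →
      f ⁻¹' S α ⊆ closure (f ⁻¹' S β) :=
  stmt12_general S hdisj hcover hfrontier f hf hopen
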